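/- For every n ∈ ℕ and every z ∈ ℕ with 0 ≤ z < 2^n, Σ_{x=0}^{2^n-1} i^{w(x)} (-1)^{z·x} = (-i)^{w(z)} · (1+i)^n, where the sum is taken in ℂ. (This unifies the even and odd cases: for n = 2m the right-hand side equals (-1)^{w(z)} i^{m+w(z)} 2^m, and for n = 2m+1 it equals (-1)^{w(z)} i^{m+w(z)} 2^m (1+i).) -/

import Mathlib

open Finset

/-- Hamming weight of a natural number: number of 1s in its binary representation. -/
def hw (x : ℕ) : ℕ := (Nat.digits 2 x).sum

/-- The `j`-th bit of `z`, as a natural number in `{0,1}`. -/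
def nbit (z j : ℕ) : ℕ := if z.testBit j then 1 else 0

/-- Partial bitwise dot product `∑_{j=0}^{n-1} z_j x_j`. -/
def ndot (n z x : ℕ) : ℕ := ∑ j ∈ Finset.range n, nbit z j * nbit x j

/-! Writing `x < 2 ^ (n + 1)` as `x'` or `2 ^ n + x'` with `x' < 2 ^ n`, the second case adds `1`
to `w(x)` and `z_n` to `z·x`, so the sum over `n + 1` bits is `1 + a (-1) ^ z_n` times the sum over
`n` bits. Hence `∑_x a ^ w(x) (-1) ^ (z·x) = ∏_{j < n} (1 + a (-1) ^ z_j)` in any commutative ring,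
and for `a = i` each factor is `1 + i` if `z_j = 0` and `1 - i = -i (1 + i)` if `z_j = 1`. -/

open Complex

lemma nbit_eq_zero_of_lt_two_pow {x n : ℕ} (hx : x < 2 ^ n) : nbit x n = 0 := by
  simp [nbit, Nat.testBit_lt_two_pow hx]

lemma nbit_two_pow_add_self {x n : ℕ} (hx : x < 2 ^ n) : nbit (2 ^ n + x) n = 1 := by
  simp [nbit, Nat.testBit_two_pow_add_eq, Nat.testBit_lt_two_pow hx]

lemma nbit_two_pow_add_of_lt {x n j : ℕ} (hj : j < n) : nbit (2 ^ n + x) j = nbit x j := by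
  simp [nbit, Nat.testBit_two_pow_add_gt hj]

lemma hw_eq_sum_nbit {x n : ℕ} (hx : x < 2 ^ n) : hw x = ∑ j ∈ range n, nbit x j := by
  induction n generalizing x with
  | zero => simp_all [hw]
  | succ n ih =>
    have hdigits : hw x = x % 2 + hw (x / 2) := by
      rcases eq_or_ne x 0 with rfl | hx0
      · simp [hw]
      · simp [hw, Nat.digits_def' one_lt_two (Nat.pos_of_ne_zero hx0)]
    have hlow : nbit x 0 = x % 2 := by
      simp only [nbit, Nat.testBit_zero]
      split_ifs with h <;> simp_all
    rw [hdigits, ih (by omega), sum_range_succ', hlow, add_comm]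
    simp only [nbit, Nat.testBit_div_two]

lemma hw_two_pow_add {x n : ℕ} (hx : x < 2 ^ n) : hw (2 ^ n + x) = hw x + 1 := by
  rw [hw_eq_sum_nbit (n := n + 1) (by omega), sum_range_succ, nbit_two_pow_add_self hx,
    hw_eq_sum_nbit hx]
  exact congrArg (· + 1) (sum_congr rfl fun j hj => nbit_two_pow_add_of_lt (mem_range.mp hj))

lemma ndot_succ_of_lt_two_pow {x n : ℕ} (z : ℕ) (hx : x < 2 ^ n) :
    ndot (n + 1) z x = ndot n z x := by
  simp [ndot, sum_range_succ, nbit_eq_zero_of_lt_two_pow hx]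

lemma ndot_succ_two_pow_add {x n : ℕ} (z : ℕ) (hx : x < 2 ^ n) :
    ndot (n + 1) z (2 ^ n + x) = ndot n z x + nbit z n := by
  rw [ndot, sum_range_succ, nbit_two_pow_add_self hx, mul_one, ndot]
  exact congrArg (· + _) (sum_congr rfl fun j hj => by
    rw [nbit_two_pow_add_of_lt (mem_range.mp hj)])

section WeightedSum

variable {R : Type*} [CommRing R]

def weightedWalshSum (a : R) (n z : ℕ) : R :=
  ∑ x ∈ range (2 ^ n), a ^ hw x * (-1) ^ ndot n z x

lemma weightedWalshSum_succ (a : R) (n z : ℕ) :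
    weightedWalshSum a (n + 1) z = (1 + a * (-1) ^ nbit z n) * weightedWalshSum a n z := by
  have hlow : ∀ x ∈ range (2 ^ n), a ^ hw x * (-1) ^ ndot (n + 1) z x =
      a ^ hw x * (-1) ^ ndot n z x := fun x hx => by
    rw [ndot_succ_of_lt_two_pow z (mem_range.mp hx)]
  have hhigh : ∀ x ∈ range (2 ^ n), a ^ hw (2 ^ n + x) * (-1) ^ ndot (n + 1) z (2 ^ n + x) =
      a * (-1) ^ nbit z n * (a ^ hw x * (-1) ^ ndot n z x) := fun x hx => by
    rw [hw_two_pow_add (mem_range.mp hx), ndot_succ_two_pow_add z (mem_range.mp hx)]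
    ring
  rw [weightedWalshSum, pow_succ, mul_two, sum_range_add, sum_congr rfl hlow,
    sum_congr rfl hhigh, ← mul_sum, weightedWalshSum]
  ring

lemma weightedWalshSum_eq_prod (a : R) (n z : ℕ) :
    weightedWalshSum a n z = ∏ j ∈ range n, (1 + a * (-1) ^ nbit z j) := by
  induction n with
  | zero => simp [weightedWalshSum, hw, ndot]
  | succ n ih => rw [weightedWalshSum_succ, ih, prod_range_succ, mul_comm]

end WeightedSum

lemma one_add_I_mul_neg_one_pow_nbit (z j : ℕ) :
    1 + I * (-1) ^ nbit z j = (-I) ^ nbit z j * (1 + I) := by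
  unfold nbit
  split_ifs
  · linear_combination I_sq
  · ring

theorem stmt_4 (n : ℕ) (z : ℕ) (hz : z < 2 ^ n) :
    ∑ x ∈ Finset.range (2 ^ n), Complex.I ^ hw x * (-1) ^ ndot n z x =
      (-Complex.I) ^ hw z * (1 + Complex.I) ^ n := by
  change weightedWalshSum I n z = _
  rw [weightedWalshSum_eq_prod, prod_congr rfl fun j _ => one_add_I_mul_neg_one_pow_nbit z j,
    prod_mul_distrib, prod_pow_eq_pow_sum, prod_const, card_range, hw_eq_sum_nbit hz]
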